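/- Fix an integer k ≥ 1, an integer 1 ≤ ℓ ≤ k, and a subset S ⊆ {1, …, ℓ−1}. If S has even cardinality, then the map I ↦ I + L'_{{ℓ},k} (componentwise addition of tuples) is an order-preserving bijection from I_S[k] onto I'_{S ∪ {ℓ}}[k]. If S has odd cardinality, then the map I ↦ I + L'_{{ℓ},k} is an order-preserving bijection from I'_S[k] onto I_{S ∪ {ℓ}}[k]. -/

import Mathlib

/-!
The least element `L` of `I'_{{ℓ}}[k]` is explicit: its only nonzero `ε` sits at position
`k+1−ℓ`, and `i_j = [j > k−ℓ]`. Sums of admissible tuples with disjoint `ε`-supports are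
admissible, and the parity conditions add up, so `I ↦ I + L` maps `I_S` into `I'_{S∪{ℓ}}` (and
`I'_S` into `I_{S∪{ℓ}}`). Conversely `L` attains equality in every admissibility constraint, so
`I' − L` is again admissible as soon as `L ≤ I'`; and `L ≤ I'` holds because the parity
condition forces `i_{k+1−ℓ}` of `I'` to be odd (all of `S` lies below `ℓ`), while the `i_j` of an
admissible tuple are nondecreasing.
-/

/-- A `2k`-tuple `(ε_1, i_1, …, ε_k, i_k)`; the position `t : Fin k` encodes the
index `j = t + 1 ∈ {1, …, k}`. -/
structure DLTuple (k : ℕ) where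
  eps : Fin k → ℕ
  idx : Fin k → ℕ

namespace DLTuple

/-- Admissibility: each `ε_j ∈ {0,1}` and, for all `1 ≤ j < k`,
`i_j ≤ i_{j+1} − ε_{j+1}` and `i_j ≡ i_{j+1} − ε_{j+1} (mod 2)`. -/
def Admissible {k : ℕ} (I : DLTuple k) : Prop :=
  (∀ j, I.eps j ≤ 1) ∧
  ∀ (j : ℕ) (h : j + 1 < k),
    I.idx ⟨j, Nat.lt_of_succ_lt h⟩ + I.eps ⟨j + 1, h⟩ ≤ I.idx ⟨j + 1, h⟩ ∧
    (I.idx ⟨j, Nat.lt_of_succ_lt h⟩ + I.eps ⟨j + 1, h⟩) % 2 = I.idx ⟨j + 1, h⟩ % 2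

/-- Membership in `I_S[k]`: admissible, `ε_j = 1` iff `k+1−j ∈ S`, and
`i_j ≡ |S ∩ {1,…,k−j}| (mod 2)`.  Here an element `s : Fin k` of `S` encodes
the integer `s + 1 ∈ {1, …, k}`, so `k+1−j` is encoded by `Fin.rev`. -/
def MemI {k : ℕ} (S : Finset (Fin k)) (I : DLTuple k) : Prop :=
  I.Admissible ∧ (∀ j : Fin k, I.eps j = 1 ↔ j.rev ∈ S) ∧
  ∀ j : Fin k, I.idx j % 2 = (S.filter fun s => s.val + 1 + (j.val + 1) ≤ k).card % 2

/-- Membership in `I'_S[k]`: as `I_S[k]`, but with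
`i_j ≡ |S ∩ {1,…,k−j}| + 1 (mod 2)`. -/
def MemI' {k : ℕ} (S : Finset (Fin k)) (I : DLTuple k) : Prop :=
  I.Admissible ∧ (∀ j : Fin k, I.eps j = 1 ↔ j.rev ∈ S) ∧
  ∀ j : Fin k, I.idx j % 2 =
    ((S.filter fun s => s.val + 1 + (j.val + 1) ≤ k).card + 1) % 2

/-- Componentwise comparison of the entries `i_1, …, i_k`. -/
def dle {k : ℕ} (I J : DLTuple k) : Prop := ∀ j, I.idx j ≤ J.idx j

/-- Componentwise minimum on the entries `i_1, …, i_k`. -/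
def dmin {k : ℕ} (I J : DLTuple k) : DLTuple k :=
  ⟨I.eps, fun j => min (I.idx j) (J.idx j)⟩

/-- Componentwise addition (in all `2k` entries). -/
def dadd {k : ℕ} (I J : DLTuple k) : DLTuple k :=
  ⟨fun j => I.eps j + J.eps j, fun j => I.idx j + J.idx j⟩

/-- The tuple `I_{j,k}`: all `ε`-entries `0`, `i_l = 0` for `l ≤ k − j` and
`i_l = 2` for `l > k − j` (here `j : Fin k` encodes the integer `j + 1`). -/
def Ijk {k : ℕ} (j : Fin k) : DLTuple k :=
  ⟨fun _ => 0, fun t => if t.val + j.val + 2 ≤ k then 0 else 2⟩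

end DLTuple

theorem Finset.card_filter_union_of_disjoint {α : Type*} [DecidableEq α] {s t : Finset α}
    (hst : Disjoint s t) (p : α → Prop) [DecidablePred p] :
    ((s ∪ t).filter p).card = (s.filter p).card + (t.filter p).card := by
  rw [Finset.filter_union, Finset.card_union_of_disjoint (Finset.disjoint_filter_filter hst)]

namespace DLTuple

variable {k : ℕ}

@[ext]
theorem ext {I J : DLTuple k} (heps : I.eps = J.eps) (hidx : I.idx = J.idx) : I = J := by
  cases I; cases J; congr

/-- `Mem S 0 = I_S[k]` and `Mem S 1 = I'_S[k]`; only the parity of `a` matters. -/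
def Mem (S : Finset (Fin k)) (a : ℕ) (I : DLTuple k) : Prop :=
  I.Admissible ∧ (∀ j : Fin k, I.eps j = 1 ↔ j.rev ∈ S) ∧
  ∀ j : Fin k, I.idx j % 2 = ((S.filter fun s => s.val + 1 + (j.val + 1) ≤ k).card + a) % 2

theorem memI_iff_mem {S : Finset (Fin k)} {I : DLTuple k} : MemI S I ↔ Mem S 0 I := by
  simp only [MemI, Mem, Nat.add_zero]

theorem memI'_iff_mem {S : Finset (Fin k)} {I : DLTuple k} : MemI' S I ↔ Mem S 1 I :=
  Iff.rfl

theorem mem_add_two {S : Finset (Fin k)} {a : ℕ} {I : DLTuple k} :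
    Mem S (a + 2) I ↔ Mem S a I := by
  refine and_congr_right fun _ => and_congr_right fun _ => forall_congr' fun j => ?_
  omega

def leastSingle (l : Fin k) : DLTuple k :=
  ⟨fun j => if j = l.rev then 1 else 0, fun j => if j.val + l.val + 2 ≤ k then 0 else 1⟩

def Tight (J : DLTuple k) : Prop :=
  ∀ (j : ℕ) (h : j + 1 < k),
    J.idx ⟨j, Nat.lt_of_succ_lt h⟩ + J.eps ⟨j + 1, h⟩ = J.idx ⟨j + 1, h⟩

def dsub (I J : DLTuple k) : DLTuple k :=
  ⟨fun j => I.eps j - J.eps j, fun j => I.idx j - J.idx j⟩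

theorem dle_dadd_right {I J : DLTuple k} (L : DLTuple k) (h : dle I J) :
    dle (dadd I L) (dadd J L) :=
  fun j => Nat.add_le_add_right (h j) _

theorem dadd_left_injective (L : DLTuple k) : Function.Injective fun I => dadd I L := by
  intro I J h
  have heps := congrArg eps h
  have hidx := congrArg idx h
  ext j
  · exact Nat.add_right_cancel (congrFun heps j)
  · exact Nat.add_right_cancel (congrFun hidx j)

theorem dadd_dsub_cancel {I J : DLTuple k} (heps : ∀ j, J.eps j ≤ I.eps j) (hidx : dle J I) :
    dadd (dsub I J) J = I := by
  ext j
  · exact Nat.sub_add_cancel (heps j)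
  · exact Nat.sub_add_cancel (hidx j)

theorem Admissible.monotone_idx {I : DLTuple k} (hI : I.Admissible) : Monotone I.idx := by
  cases k with
  | zero => exact fun i => i.elim0
  | succ n =>
    exact Fin.monotone_iff_le_succ.2 fun j =>
      le_of_add_le_left (hI.2 j (Nat.succ_lt_succ j.2)).1

section Mem

variable {S T : Finset (Fin k)} {a b : ℕ} {I J : DLTuple k}

theorem Mem.eps_eq (hI : Mem S a I) (j : Fin k) : I.eps j = if j.rev ∈ S then 1 else 0 := by
  have hle := hI.1.1 j
  have hiff := hI.2.1 j
  split_ifs with h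
  · exact hiff.2 h
  · have := mt hiff.1 h
    omega

theorem Mem.eps_le_eps (hJ : Mem T b J) (hI : Mem S a I) (hTS : T ⊆ S) (j : Fin k) :
    J.eps j ≤ I.eps j := by
  rw [hJ.eps_eq, hI.eps_eq]
  split_ifs with hT hS <;> first | omega | exact absurd (hTS hT) hS

theorem mem_union_dadd (hST : Disjoint S T) (hI : Mem S a I) (hJ : Mem T b J) :
    Mem (S ∪ T) (a + b) (dadd I J) := by
  have heps : ∀ j, (dadd I J).eps j = if j.rev ∈ S ∪ T then 1 else 0 := fun j => by
    have hdisj : j.rev ∈ S → j.rev ∉ T := fun h => Finset.disjoint_left.1 hST h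
    simp only [DLTuple.dadd, hI.eps_eq, hJ.eps_eq, Finset.mem_union]
    split_ifs <;> simp_all
  refine ⟨⟨fun j => ?_, fun j hj => ?_⟩, fun j => ?_, fun j => ?_⟩
  · rw [heps]; split_ifs <;> omega
  · have := hI.1.2 j hj
    have := hJ.1.2 j hj
    simp only [DLTuple.dadd]
    omega
  · rw [heps]; split_ifs <;> simp_all
  · have := hI.2.2 j
    have := hJ.2.2 j
    simp only [DLTuple.dadd, Finset.card_filter_union_of_disjoint hST]
    omega

theorem mem_dsub (hST : Disjoint S T) (hI : Mem (S ∪ T) (a + b) I) (hJ : Mem T b J)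
    (hJt : Tight J) (hJI : dle J I) : Mem S a (dsub I J) := by
  have hJI' := hJ.eps_le_eps hI Finset.subset_union_right
  have heps : ∀ j, (dsub I J).eps j = if j.rev ∈ S then 1 else 0 := fun j => by
    have hdisj : j.rev ∈ S → j.rev ∉ T := fun h => Finset.disjoint_left.1 hST h
    simp only [DLTuple.dsub, hI.eps_eq, hJ.eps_eq, Finset.mem_union]
    split_ifs <;> simp_all
  refine ⟨⟨fun j => ?_, fun j hj => ?_⟩, fun j => ?_, fun j => ?_⟩
  · rw [heps]; split_ifs <;> omega
  · have := hI.1.2 j hj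
    have := hJt j hj
    have := hJI ⟨j, Nat.lt_of_succ_lt hj⟩
    have := hJI ⟨j + 1, hj⟩
    have := hJI' ⟨j + 1, hj⟩
    simp only [DLTuple.dsub]
    omega
  · rw [heps]; split_ifs <;> simp_all
  · have := hI.2.2 j
    have := hJ.2.2 j
    have := hJI j
    simp only [DLTuple.dsub]
    rw [Finset.card_filter_union_of_disjoint hST] at *
    omega

end Mem

section leastSingle

variable {l : Fin k}

theorem card_filter_singleton (j : Fin k) :
    (({l} : Finset (Fin k)).filter fun s => s.val + 1 + (j.val + 1) ≤ k).card
      = if j.val + l.val + 2 ≤ k then 1 else 0 := by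
  rw [Finset.filter_singleton]
  split_ifs <;> first | rfl | omega

theorem leastSingle_mem : Mem {l} 1 (leastSingle l) := by
  refine ⟨⟨fun j => ?_, fun j hj => ?_⟩, fun j => ?_, fun j => ?_⟩
  · simp only [leastSingle]; split_ifs <;> omega
  · have := l.isLt
    simp only [leastSingle, Fin.ext_iff, Fin.val_rev]
    split_ifs <;> omega
  · simp only [leastSingle, Finset.mem_singleton, Fin.rev_eq_iff]
    split_ifs <;> simp_all
  · rw [card_filter_singleton]
    simp only [leastSingle]
    split_ifs <;> omega

theorem leastSingle_tight : Tight (leastSingle l) := by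
  intro j hj
  have := l.isLt
  simp only [leastSingle, Fin.ext_iff, Fin.val_rev]
  split_ifs <;> omega

theorem eq_leastSingle {L : DLTuple k} (hL : MemI' {l} L ∧ ∀ I, MemI' {l} I → dle L I) :
    L = leastSingle l := by
  ext j
  · rw [(memI'_iff_mem.1 hL.1).eps_eq j]
    simp only [leastSingle, Finset.mem_singleton, Fin.rev_eq_iff]
  · have hle := hL.2 _ (memI'_iff_mem.2 leastSingle_mem) j
    have hpar := hL.1.2.2 j
    rw [card_filter_singleton] at hpar
    simp only [leastSingle] at hle ⊢
    split_ifs at hpar hle ⊢ <;> omega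

/-- `I.idx l.rev` is odd because all of `S` lies below `l`, and `I.idx` is monotone. -/
theorem leastSingle_dle {S : Finset (Fin k)} (hS : ∀ s ∈ S, s < l) {a : ℕ}
    (ha : S.card % 2 = a % 2) {I : DLTuple k} (hI : Mem (insert l S) (a + 1) I) :
    dle (leastSingle l) I := by
  have hlrev : ((insert l S).filter fun s => s.val + 1 + (l.rev.val + 1) ≤ k) = S := by
    rw [Finset.filter_insert, if_neg (by simp only [Fin.val_rev]; omega),
      Finset.filter_true_of_mem fun s hs => by have := hS s hs; simp only [Fin.val_rev]; omega]
  have hodd := hI.2.2 l.rev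
  rw [hlrev] at hodd
  intro j
  simp only [leastSingle]
  split_ifs with hj
  · exact Nat.zero_le _
  · have hrevj : l.rev ≤ j := by rw [Fin.le_iff_val_le_val, Fin.val_rev]; omega
    have := hI.1.monotone_idx hrevj
    omega

theorem mem_insert_dadd_leastSingle {S : Finset (Fin k)} (hlS : l ∉ S) {a : ℕ} {I : DLTuple k}
    (hI : Mem S a I) : Mem (insert l S) (a + 1) (dadd I (leastSingle l)) := by
  rw [← Finset.union_singleton]
  exact mem_union_dadd (Finset.disjoint_singleton_right.2 hlS) hI leastSingle_mem

theorem existsUnique_dadd_leastSingle_eq {S : Finset (Fin k)} (hS : ∀ s ∈ S, s < l) {a : ℕ}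
    (ha : S.card % 2 = a % 2) {I' : DLTuple k} (hI' : Mem (insert l S) (a + 1) I') :
    ∃! I, Mem S a I ∧ dadd I (leastSingle l) = I' := by
  have hlS : l ∉ S := fun h => lt_irrefl l (hS l h)
  have hle := leastSingle_dle hS ha hI'
  rw [← Finset.union_singleton] at hI'
  have hcancel :=
    dadd_dsub_cancel (leastSingle_mem.eps_le_eps hI' Finset.subset_union_right) hle
  refine ⟨dsub I' (leastSingle l), ⟨?_, hcancel⟩, fun I hI => ?_⟩
  · exact mem_dsub (Finset.disjoint_singleton_right.2 hlS) hI' leastSingle_mem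
      leastSingle_tight hle
  · exact dadd_left_injective _ (hI.2.trans hcancel.symm)

end leastSingle

end DLTuple

open DLTuple in
theorem add_least_single_order_bijection_general (k : ℕ) (l : Fin k)
    (S : Finset (Fin k)) (hS : ∀ s ∈ S, s.val < l.val)
    (L1 : DLTuple k) (hL1 : MemI' {l} L1 ∧ ∀ I, MemI' {l} I → dle L1 I) :
    (Even S.card →
      (∀ I, MemI S I → MemI' (insert l S) (dadd I L1)) ∧
      (∀ I J, MemI S I → MemI S J → dle I J → dle (dadd I L1) (dadd J L1)) ∧
      (∀ I', MemI' (insert l S) I' → ∃! I, MemI S I ∧ dadd I L1 = I')) ∧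
    (Odd S.card →
      (∀ I, MemI' S I → MemI (insert l S) (dadd I L1)) ∧
      (∀ I J, MemI' S I → MemI' S J → dle I J → dle (dadd I L1) (dadd J L1)) ∧
      (∀ I', MemI (insert l S) I' → ∃! I, MemI' S I ∧ dadd I L1 = I')) := by
  obtain rfl := eq_leastSingle hL1
  have hlS : l ∉ S := fun h => lt_irrefl _ (hS l h)
  refine ⟨fun hev => ⟨fun I hI => ?_, fun I J _ _ => dle_dadd_right _, fun I' hI' => ?_⟩,
    fun hodd => ⟨fun I hI => ?_, fun I J _ _ => dle_dadd_right _, fun I' hI' => ?_⟩⟩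
  · exact mem_insert_dadd_leastSingle hlS (memI_iff_mem.1 hI)
  · simpa only [memI_iff_mem] using
      existsUnique_dadd_leastSingle_eq hS (Nat.even_iff.1 hev) (a := 0) hI'
  · exact memI_iff_mem.2 (mem_add_two.1 (mem_insert_dadd_leastSingle hlS hI))
  · exact existsUnique_dadd_leastSingle_eq hS (Nat.odd_iff.1 hodd)
      (mem_add_two.2 (memI_iff_mem.1 hI'))

open DLTuple in
/-- For `ℓ ∈ {1,…,k}` and `S ⊆ {1,…,ℓ−1}`: if `|S|` is even, then `I ↦ I + L'_{{ℓ},k}` is an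
order-preserving bijection `I_S[k] → I'_{S∪{ℓ}}[k]`; if `|S|` is odd, it is an
order-preserving bijection `I'_S[k] → I_{S∪{ℓ}}[k]`.  Here `l : Fin k` encodes `ℓ = l + 1`
and `L1` is the least element of `I'_{{ℓ}}[k]`. -/
theorem add_least_single_order_bijection (k : ℕ) (hk : 1 ≤ k) (l : Fin k)
    (S : Finset (Fin k)) (hS : ∀ s ∈ S, s.val < l.val)
    (L1 : DLTuple k) (hL1 : MemI' {l} L1 ∧ ∀ I, MemI' {l} I → dle L1 I) :
    (Even S.card →
      (∀ I, MemI S I → MemI' (insert l S) (dadd I L1)) ∧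
      (∀ I J, MemI S I → MemI S J → dle I J → dle (dadd I L1) (dadd J L1)) ∧
      (∀ I', MemI' (insert l S) I' → ∃! I, MemI S I ∧ dadd I L1 = I')) ∧
    (Odd S.card →
      (∀ I, MemI' S I → MemI (insert l S) (dadd I L1)) ∧
      (∀ I J, MemI' S I → MemI' S J → dle I J → dle (dadd I L1) (dadd J L1)) ∧
      (∀ I', MemI (insert l S) I' → ∃! I, MemI' S I ∧ dadd I L1 = I')) :=
  add_least_single_order_bijection_general k l S hS L1 hL1
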